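/- arXiv:1211.4554 — 3 statements merged into one kernel-verified Lean document; each statement's English description precedes it below -/
import Mathlib

section
/- Let Γ be a symmetric numerical semigroup, g ∈ Γ ∖ {0}, and a ∈ ℕ, and assume that every element of Δ(Ap(Γ, g) ∖ {0}) is a multiple of a. Let A be a relative ideal of Γ whose minimal generating set is {x₀, x₁, …, xₙ} with x₀ = 0, and suppose there exists i such that xᵢ is not a multiple of a. Then A is Huneke–Wiegand. -/
open Pointwise

/-- A numerical semigroup, viewed as a set of integers: it consists of nonnegative
integers, contains `0`, is closed under addition, and has finite complement in `ℕ`. -/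
def IsNumericalSemigroup (Γ : Set ℤ) : Prop :=
  (∀ x ∈ Γ, 0 ≤ x) ∧ (0 : ℤ) ∈ Γ ∧ (∀ x ∈ Γ, ∀ y ∈ Γ, x + y ∈ Γ) ∧
    {n : ℤ | 0 ≤ n ∧ n ∉ Γ}.Finite

/-- A relative ideal of a numerical semigroup `Γ`: a nonempty set `A ⊆ ℤ` with
`A + Γ ⊆ A` and `x + A ⊆ Γ` for some integer `x`. -/
def IsRelativeIdeal (Γ A : Set ℤ) : Prop :=
  A.Nonempty ∧ (∀ a ∈ A, ∀ g ∈ Γ, a + g ∈ A) ∧ ∃ x : ℤ, ∀ a ∈ A, x + a ∈ Γ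

/-- `A −ℤ B = {z ∈ ℤ : z + B ⊆ A}`. -/
def subZ (A B : Set ℤ) : Set ℤ := {z : ℤ | ∀ b ∈ B, z + b ∈ A}

/-- The dual `A* = Γ −ℤ A` of a relative ideal. -/
def dual (Γ A : Set ℤ) : Set ℤ := subZ Γ A

/-- The translateSet `x + A` of a set of integers. -/
def translateSet (x : ℤ) (A : Set ℤ) : Set ℤ := (x + ·) '' A

/-- A relative ideal `A` of `Γ` is Huneke–Wiegand if it is principal or there are
relative ideals `P`, `Q` with `P ∪ Q = A` and `(P + A*) ∩ (Q + A*) ≠ (P ∩ Q) + A*`. -/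
def IsHunekeWiegand (Γ A : Set ℤ) : Prop :=
  (∃ x : ℤ, A = translateSet x Γ) ∨
    ∃ P Q : Set ℤ, IsRelativeIdeal Γ P ∧ IsRelativeIdeal Γ Q ∧ P ∪ Q = A ∧
      (P + dual Γ A) ∩ (Q + dual Γ A) ≠ (P ∩ Q) + dual Γ A

/-- `Γ` is a Huneke–Wiegand numerical semigroup if all its relative ideals are
Huneke–Wiegand. -/
def IsHWSemigroup (Γ : Set ℤ) : Prop :=
  ∀ A : Set ℤ, IsRelativeIdeal Γ A → IsHunekeWiegand Γ A

/-- `Γ = a₁Γ₁ + a₂Γ₂` is a gluing of the numerical semigroups `Γ₁` and `Γ₂`, where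
`a₁ ∈ Γ₂ ∖ {0}`, `a₂ ∈ Γ₁ ∖ {0}` and `gcd(a₁, a₂) = 1`. -/
def IsGluing (Γ₁ Γ₂ : Set ℤ) (a₁ a₂ : ℤ) (Γ : Set ℤ) : Prop :=
  IsNumericalSemigroup Γ₁ ∧ IsNumericalSemigroup Γ₂ ∧
    a₁ ∈ Γ₂ ∧ a₁ ≠ 0 ∧ a₂ ∈ Γ₁ ∧ a₂ ≠ 0 ∧ Int.gcd a₁ a₂ = 1 ∧
    Γ = a₁ • Γ₁ + a₂ • Γ₂

/-- The Apéry set `Ap(S, z) = {s ∈ S : s − z ∉ S}`. -/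
def apery (S : Set ℤ) (z : ℤ) : Set ℤ := {s ∈ S | s - z ∉ S}

/-- The delta set `Δ(S) = {s − t : s, t ∈ S, t < s}`. -/
def deltaSet (S : Set ℤ) : Set ℤ := {d : ℤ | ∃ s ∈ S, ∃ t ∈ S, t < s ∧ d = s - t}

/-- A symmetric numerical semigroup: there is a Frobenius number `F` (the largest
integer not in `Γ`) such that `z ∈ Γ ↔ F − z ∉ Γ` for all integers `z`. -/
def IsSymmetricNS (Γ : Set ℤ) : Prop :=
  IsNumericalSemigroup Γ ∧
    ∃ F : ℤ, F ∉ Γ ∧ (∀ z : ℤ, z ∉ Γ → z ≤ F) ∧ ∀ z : ℤ, z ∈ Γ ↔ F - z ∉ Γ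


/-- A finite generating set of a relative ideal `A` of `Γ`. -/
def IsGeneratingSet (Γ A : Set ℤ) (X : Finset ℤ) : Prop :=
  ↑X ⊆ A ∧ A = ⋃ x ∈ X, translateSet x Γ

/-- The minimal generating set of a relative ideal: a generating set no proper subset
of which generates. -/
def IsMinimalGeneratingSet (Γ A : Set ℤ) (X : Finset ℤ) : Prop :=
  IsGeneratingSet Γ A X ∧ ∀ Y : Finset ℤ, Y ⊂ X → ¬ IsGeneratingSet Γ A Y

/-- Let `Γ` be a symmetric numerical semigroup, `g ∈ Γ ∖ {0}` and `a ∈ ℕ` with every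
element of `Δ(Ap(Γ, g) ∖ {0})` a multiple of `a`. If `A` is a relative ideal of `Γ`
whose minimal generating set contains `0` and contains some element not divisible by
`a`, then `A` is Huneke–Wiegand. -/
theorem isHunekeWiegand_of_not_dvd (Γ : Set ℤ) (hΓ : IsSymmetricNS Γ)
    (g : ℤ) (hgΓ : g ∈ Γ) (hg0 : g ≠ 0) (a : ℤ) (ha : 0 ≤ a)
    (hΔ : ∀ d ∈ deltaSet (apery Γ g \ {0}), a ∣ d)
    (A : Set ℤ) (hA : IsRelativeIdeal Γ A) (X : Finset ℤ)
    (hX : IsMinimalGeneratingSet Γ A X) (h0 : (0 : ℤ) ∈ X)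
    (hi : ∃ xi ∈ X, ¬ a ∣ xi) :
    IsHunekeWiegand Γ A := by
  classical
  obtain ⟨⟨hnn, h0Γ, hadd, _⟩, F, hFΓ, hFmax, hsym⟩ := hΓ
  obtain ⟨xi, hxiX, hxia⟩ := hi
  obtain ⟨⟨hXA, hAeq⟩, hmin⟩ := hX
  have hgpos : 0 < g := (hnn g hgΓ).lt_of_ne (Ne.symm hg0)
  have memT : ∀ x b : ℤ, b ∈ translateSet x Γ ↔ ∃ γ, γ ∈ Γ ∧ x + γ = b := by
    intro x b; exact Set.mem_image _ _ _
  have memA : ∀ b : ℤ, b ∈ A ↔ ∃ x' ∈ X, ∃ γ ∈ Γ, x' + γ = b := by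
    intro b
    rw [hAeq]
    constructor
    · intro hb
      rcases Set.mem_iUnion₂.mp hb with ⟨x', hx', hbx⟩
      rcases (memT x' b).mp hbx with ⟨γ, hγ, he⟩
      exact ⟨x', hx', γ, hγ, he⟩
    · rintro ⟨x', hx', γ, hγ, he⟩
      exact Set.mem_biUnion hx' ((memT x' b).mpr ⟨γ, hγ, he⟩)
  -- Minimality: differences of distinct generators are not in Γ
  have M : ∀ x ∈ X, ∀ y ∈ X, x ≠ y → x - y ∉ Γ := by
    intro x hx y hy hxy hmem
    refine hmin (X.erase x) (Finset.erase_ssubset hx) ⟨?_, ?_⟩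
    · intro z hz
      have hz' : z ∈ X.erase x := by exact_mod_cast hz
      exact hXA (Finset.mem_coe.mpr (Finset.mem_of_mem_erase hz'))
    · apply Set.Subset.antisymm
      · intro b hb
        rcases (memA b).mp hb with ⟨x', hx', γ, hγ, rfl⟩
        by_cases hx'x : x' = x
        · subst hx'x
          refine Set.mem_biUnion (Finset.mem_erase.mpr ⟨Ne.symm hxy, hy⟩) ?_
          exact (memT y _).mpr ⟨(x' - y) + γ, hadd _ hmem _ hγ, by ring⟩
        · exact Set.mem_biUnion (Finset.mem_erase.mpr ⟨hx'x, hx'⟩)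
            ((memT x' _).mpr ⟨γ, hγ, rfl⟩)
      · intro b hb
        rcases Set.mem_iUnion₂.mp hb with ⟨x', hx', hbx⟩
        rcases (memT x' b).mp hbx with ⟨γ, hγ, he⟩
        exact (memA b).mpr ⟨x', Finset.mem_of_mem_erase hx', γ, hγ, he⟩
  have hsubA : ∀ x ∈ X, translateSet x Γ ⊆ A := by
    intro x hx b hb
    rcases (memT x b).mp hb with ⟨γ, hγ, he⟩
    exact (memA b).mpr ⟨x, hx, γ, hγ, he⟩
  -- key dual elements
  have starA : ∀ c ∈ X, F + g - c ∈ dual Γ A := by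
    intro c hc
    simp only [dual, subZ, Set.mem_setOf_eq]
    intro b hb
    rcases (memA b).mp hb with ⟨x', hx', γ', hγ', rfl⟩
    rw [hsym]
    intro hs
    have hsum : (F - (F + g - c + (x' + γ'))) + g + γ' = c - x' := by ring
    have hcx : c - x' ∈ Γ := by
      rw [← hsum]; exact hadd _ (hadd _ hs _ hgΓ) _ hγ'
    by_cases h : x' = c
    · subst h
      have h1 := hnn _ hs
      have h2 := hnn _ hγ'
      omega
    · exact M c hc x' hx' (fun hh => h hh.symm) hcx
  obtain ⟨x0, hx0⟩ := hA.2.2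
  have hideal : ∀ s : Finset ℤ, (∀ x ∈ s, x ∈ X) → s.Nonempty →
      IsRelativeIdeal Γ (⋃ x ∈ s, translateSet x Γ) := by
    rintro s hsX ⟨x, hxs⟩
    refine ⟨⟨x, Set.mem_biUnion hxs ((memT x x).mpr ⟨0, h0Γ, add_zero x⟩)⟩, ?_, x0, ?_⟩
    · intro b hb γ hγ
      rcases Set.mem_iUnion₂.mp hb with ⟨y, hys, hby⟩
      rcases (memT y b).mp hby with ⟨γ', hγ', rfl⟩
      exact Set.mem_biUnion hys ((memT y _).mpr ⟨γ' + γ, hadd _ hγ' _ hγ, by ring⟩)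
    · intro b hb
      rcases Set.mem_iUnion₂.mp hb with ⟨y, hys, hby⟩
      exact hx0 b (hsubA y (hsX y hys) hby)
  set P : Set ℤ := ⋃ x ∈ X.filter (fun x => a ∣ x), translateSet x Γ with hPdef
  set Q : Set ℤ := ⋃ x ∈ X.filter (fun x => ¬ a ∣ x), translateSet x Γ with hQdef
  have h0P : (0 : ℤ) ∈ P :=
    Set.mem_biUnion (Finset.mem_filter.mpr ⟨h0, dvd_zero a⟩)
      ((memT 0 0).mpr ⟨0, h0Γ, by ring⟩)
  have hxiQ : xi ∈ Q :=
    Set.mem_biUnion (Finset.mem_filter.mpr ⟨hxiX, hxia⟩)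
      ((memT xi xi).mpr ⟨0, h0Γ, add_zero xi⟩)
  refine Or.inr ⟨P, Q, ?_, ?_, ?_, ?_⟩
  · exact hideal _ (fun x hx => (Finset.mem_filter.mp hx).1) ⟨0, Finset.mem_filter.mpr ⟨h0, dvd_zero a⟩⟩
  · exact hideal _ (fun x hx => (Finset.mem_filter.mp hx).1) ⟨xi, Finset.mem_filter.mpr ⟨hxiX, hxia⟩⟩
  · -- P ∪ Q = A
    rw [hAeq]
    apply Set.Subset.antisymm
    · rintro b (hb | hb) <;> rcases Set.mem_iUnion₂.mp hb with ⟨y, hy, hby⟩ <;>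
        exact Set.mem_biUnion (Finset.mem_filter.mp hy).1 hby
    · intro b hb
      rcases Set.mem_iUnion₂.mp hb with ⟨y, hy, hby⟩
      by_cases h : a ∣ y
      · exact Or.inl (Set.mem_biUnion (Finset.mem_filter.mpr ⟨hy, h⟩) hby)
      · exact Or.inr (Set.mem_biUnion (Finset.mem_filter.mpr ⟨hy, h⟩) hby)
  · -- the inequality, witnessed by F + g
    intro heq
    have hw1 : F + g ∈ P + dual Γ A := by
      have h2 : (0 : ℤ) + (F + g - 0) = F + g := by ring
      rw [← h2]
      exact Set.add_mem_add h0P (starA 0 h0)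
    have hw2 : F + g ∈ Q + dual Γ A := by
      have h2 : xi + (F + g - xi) = F + g := by ring
      rw [← h2]
      exact Set.add_mem_add hxiQ (starA xi hxiX)
    have hw : F + g ∈ (P ∩ Q) + dual Γ A := by rw [← heq]; exact ⟨hw1, hw2⟩
    rcases Set.mem_add.mp hw with ⟨u, hu, z, hz, huz⟩
    rcases Set.mem_iUnion₂.mp hu.1 with ⟨x, hxXp, hux⟩
    rcases Set.mem_iUnion₂.mp hu.2 with ⟨y, hyXq, huy⟩
    rcases (memT x u).mp hux with ⟨γ, hγΓ, hγe⟩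
    rcases (memT y u).mp huy with ⟨δ, hδΓ, hδe⟩
    obtain ⟨hxX, hax⟩ := Finset.mem_filter.mp hxXp
    obtain ⟨hyX, hay⟩ := Finset.mem_filter.mp hyXq
    have hzmem : ∀ b ∈ A, z + b ∈ Γ := hz
    have hzx : z + x ∈ Γ := hzmem x (hXA hxX)
    have hzy : z + y ∈ Γ := hzmem y (hXA hyX)
    have hγg : γ - g ∉ Γ := by
      intro hc
      apply (hsym (γ - g)).mp hc
      have he : F - (γ - g) = z + x := by omega
      rw [he]; exact hzx
    have hδg : δ - g ∉ Γ := by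
      intro hc
      apply (hsym (δ - g)).mp hc
      have he : F - (δ - g) = z + y := by omega
      rw [he]; exact hzy
    have hxy : x ≠ y := fun h => hay (h ▸ hax)
    have hγδ : γ ≠ δ := by intro h; apply hxy; omega
    by_cases hγ0 : γ = 0
    · apply M x hxX y hyX hxy
      have he : x - y = δ := by omega
      rw [he]; exact hδΓ
    by_cases hδ0 : δ = 0
    · apply M y hyX x hxX (Ne.symm hxy)
      have he : y - x = γ := by omega
      rw [he]; exact hγΓ
    have hγA : γ ∈ apery Γ g \ {0} := ⟨⟨hγΓ, hγg⟩, by simpa using hγ0⟩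
    have hδA : δ ∈ apery Γ g \ {0} := ⟨⟨hδΓ, hδg⟩, by simpa using hδ0⟩
    rcases lt_or_gt_of_ne hγδ with h | h
    · have hd : a ∣ δ - γ := hΔ _ ⟨δ, hδA, γ, hγA, h, rfl⟩
      apply hay
      have he : y = x - (δ - γ) := by omega
      rw [he]; exact dvd_sub hax hd
    · have hd : a ∣ γ - δ := hΔ _ ⟨γ, hγA, δ, hδA, h, rfl⟩
      apply hay
      have he : y = x + (γ - δ) := by omega
      rw [he]; exact dvd_add hax hd
end

section
/- Let Γ be a symmetric numerical semigroup and a ∈ Γ ∖ {0}. If s ∈ ℕ ∖ Γ and s ∉ Δ(Ap(Γ, a)), then the arithmetic sequence (F(Γ) + a − s; s; 2) lies in S_Γ^s and is irreducible; that is, F(Γ) + a − s, F(Γ) + a, F(Γ) + a + s all lie in Γ, and there do not exist y, z ∈ ℤ with y, y + s, z, z + s ∈ Γ and y + z = F(Γ) + a − s. -/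
open Pointwise

/-- Let `Γ` be a symmetric numerical semigroup with Frobenius number `F` and let
`a ∈ Γ ∖ {0}`. If `s ∈ ℕ ∖ Γ` and `s ∉ Δ(Ap(Γ, a))`, then the arithmetic sequence
`(F + a − s; s; 2)` lies in `S_Γ^s` and is irreducible. -/
theorem irreducible_sequence (Γ : Set ℤ) (hΓ : IsNumericalSemigroup Γ)
    (F : ℤ) (hF : F ∉ Γ) (hFmax : ∀ z : ℤ, z ∉ Γ → z ≤ F)
    (hsym : ∀ z : ℤ, z ∈ Γ ↔ F - z ∉ Γ)
    (a : ℤ) (haΓ : a ∈ Γ) (ha0 : a ≠ 0)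
    (s : ℤ) (hs0 : 0 ≤ s) (hsΓ : s ∉ Γ) (hsΔ : s ∉ deltaSet (apery Γ a)) :
    (F + a - s ∈ Γ ∧ F + a ∈ Γ ∧ F + a + s ∈ Γ) ∧
      ¬ ∃ y z : ℤ, y ∈ Γ ∧ y + s ∈ Γ ∧ z ∈ Γ ∧ z + s ∈ Γ ∧ y + z = F + a - s := by
  obtain ⟨hpos, h0, hadd, _⟩ := hΓ
  have hapos : 0 < a := lt_of_le_of_ne (hpos a haΓ) (Ne.symm ha0)
  have hspos : 0 < s := lt_of_le_of_ne hs0 (by rintro rfl; exact hsΓ h0)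
  have hgtF : ∀ x : ℤ, F < x → x ∈ Γ := fun x hx => by
    by_contra h; exact absurd (hFmax x h) (not_le.mpr hx)
  have h1 : F + a - s ∈ Γ := by
    apply (hsym _).mpr
    intro h
    have hs' : (F - (F + a - s)) + a ∈ Γ := hadd _ h _ haΓ
    have : s ∈ Γ := by convert hs' using 1; ring
    exact hsΓ this
  have h2 : F + a ∈ Γ := hgtF _ (by linarith)
  have h3 : F + a + s ∈ Γ := hgtF _ (by linarith)
  refine ⟨⟨h1, h2, h3⟩, ?_⟩
  rintro ⟨y, z, hy, hys, hz, hzs, hyz⟩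
  apply hsΔ
  refine ⟨y + s, ⟨hys, ?_⟩, y, ⟨hy, ?_⟩, by linarith, by ring⟩
  · intro h
    have hFz : F - z = y + s - a := by linarith
    exact (hsym z).mp hz (hFz ▸ h)
  · intro h
    have hFz : F - (z + s) = y - a := by linarith
    exact (hsym (z + s)).mp hzs (hFz ▸ h)
end

section
/- Let Γ be a symmetric numerical semigroup. For every s ∈ ℕ that does not lie in the intersection ⋂_{a ∈ Γ ∖ {0}} Δ(Ap(Γ, a)), the relative ideal (0, s) = Γ ∪ (s + Γ) is Huneke–Wiegand. -/
open Pointwise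

/-- Let `Γ` be a symmetric numerical semigroup. For every `s ∈ ℕ` not lying in
`⋂_{a ∈ Γ ∖ {0}} Δ(Ap(Γ, a))`, the relative ideal `(0, s) = Γ ∪ (s + Γ)` is
Huneke–Wiegand. -/
theorem two_generated_isHunekeWiegand (Γ : Set ℤ) (hΓ : IsSymmetricNS Γ)
    (s : ℤ) (hs0 : 0 ≤ s)
    (hs : s ∉ ⋂ a ∈ {a : ℤ | a ∈ Γ ∧ a ≠ 0}, deltaSet (apery Γ a)) :
    IsHunekeWiegand Γ (Γ ∪ translateSet s Γ) := by

  obtain ⟨⟨hpos, hzero, hadd, hfin⟩, F, hF, hFmax, hsym⟩ := hΓ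
  by_cases hsΓ : s ∈ Γ
  · left
    refine ⟨0, ?_⟩
    ext x
    simp only [translateSet, Set.mem_union, Set.mem_image]
    constructor
    · rintro (hx | ⟨g, hg, rfl⟩)
      · exact ⟨x, hx, by ring⟩
      · exact ⟨s + g, hadd s hsΓ g hg, by ring⟩
    · rintro ⟨g, hg, rfl⟩
      exact Or.inl (by simpa using hg)
  · right
    simp only [Set.mem_iInter, Set.mem_setOf_eq] at hs
    push_neg at hs
    obtain ⟨a, ⟨haΓ, ha0⟩, hdelta⟩ := hs
    have ha : 0 < a := lt_of_le_of_ne (hpos a haΓ) (Ne.symm ha0)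
    have hspos : 0 < s := lt_of_le_of_ne hs0 (fun h => hsΓ (h ▸ hzero))
    have hna : (-a : ℤ) ∉ Γ := fun h => by linarith [hpos _ h]
    have hFa : F + a ∈ Γ := (hsym (F + a)).mpr (by
      intro h
      exact hna (by simpa [show F - (F + a) = -a by ring] using h))
    have hFas : F + a + s ∈ Γ := by
      by_contra h
      linarith [hFmax _ h]
    have hFs : F + a - s ∈ Γ := (hsym (F + a - s)).mpr (by
      intro h
      have h2 : F - (F + a - s) + a ∈ Γ := hadd _ h _ haΓ
      exact hsΓ (by simpa [show F - (F + a - s) + a = s by ring] using h2))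
    have hdual : ∀ z : ℤ, z ∈ dual Γ (Γ ∪ translateSet s Γ) ↔ z ∈ Γ ∧ z + s ∈ Γ := by
      intro z
      constructor
      · intro hz
        exact ⟨by simpa using hz 0 (Or.inl hzero),
          by simpa using hz s (Or.inr ⟨0, hzero, by ring⟩)⟩
      · rintro ⟨h1, h2⟩ b (hb | ⟨g, hg, rfl⟩)
        · exact hadd _ h1 _ hb
        · have := hadd _ h2 _ hg
          simpa [add_assoc] using this
    refine ⟨Γ, translateSet s Γ, ⟨⟨0, hzero⟩, hadd, 0, fun b hb => by simpa using hb⟩,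
      ⟨⟨s, 0, hzero, by ring⟩, ?_, F + 1, ?_⟩, rfl, ?_⟩
    · rintro b ⟨g, hg, rfl⟩ g' hg'
      exact ⟨g + g', hadd _ hg _ hg', by ring⟩
    · rintro b ⟨g, hg, rfl⟩
      show F + 1 + (s + g) ∈ Γ
      by_contra h
      have := hFmax _ h
      have := hpos _ hg
      linarith
    · intro heq
      have hmem : F + a ∈ (Γ + dual Γ (Γ ∪ translateSet s Γ)) ∩
          (translateSet s Γ + dual Γ (Γ ∪ translateSet s Γ)) := by
        constructor
        · exact Set.mem_add.mpr ⟨0, hzero, F + a,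
            (hdual _).mpr ⟨hFa, hFas⟩, by ring⟩
        · exact Set.mem_add.mpr ⟨s, ⟨0, hzero, by ring⟩, F + a - s,
            (hdual _).mpr ⟨hFs, by simpa [show F + a - s + s = F + a by ring] using hFa⟩,
            by ring⟩
      rw [heq] at hmem
      obtain ⟨g, ⟨hgΓ, g', hg', hgs⟩, z, hz, hgz⟩ := Set.mem_add.mp hmem
      have hgs' : s + g' = g := hgs
      obtain ⟨hzΓ, hzs⟩ := (hdual z).mp hz
      by_cases hza : z - a ∈ Γ
      · have h2 : g + (z - a) ∈ Γ := hadd _ hgΓ _ hza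
        exact hF (by rwa [show g + (z - a) = F by linarith] at h2)
      · by_cases hzsa : z + s - a ∈ Γ
        · have h2 : g' + (z + s - a) ∈ Γ := hadd _ hg' _ hzsa
          exact hF (by rwa [show g' + (z + s - a) = F by linarith] at h2)
        · exact hdelta ⟨z + s, ⟨hzs, hzsa⟩, z, ⟨hzΓ, hza⟩, by linarith, by ring⟩
end
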